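/- Let ψ ≥ 0. Then ∫₀¹ Φ(ψ + Φ⁻¹(x)) dx = Φ(ψ/√2); that is, the area under the ROC curve R(x) = Φ(ψ + Φ⁻¹(x)) of the Gaussian mechanism with sensitivity index ψ equals Φ(ψ/√2). -/

import Mathlib

/-! Substituting `x = Φ z` turns the area into `∫ Φ(ψ + z) dN(0,1)(z) = P(Z₁ - Z₂ ≤ ψ)` for
independent standard normal `Z₁, Z₂`. Since `Z₁ - Z₂` has law `N(0,2)`, this equals `Φ(ψ/√2)`. -/

open MeasureTheory ProbabilityTheory Real

/-- `Φ`, the cumulative distribution function of the standard normal distribution. -/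
noncomputable def stdNormalCDF (x : ℝ) : ℝ := ((gaussianReal 0 1) (Set.Iic x)).toReal

/-- `Φ⁻¹`, the standard normal quantile function (inverse of `Φ`). -/
noncomputable def stdNormalCDFInv : ℝ → ℝ := Function.invFun stdNormalCDF

open Set Filter Topology
open scoped NNReal

theorem cdf_conv (μ ν : Measure ℝ) [IsProbabilityMeasure μ] [IsProbabilityMeasure ν] (x : ℝ) :
    cdf (μ ∗ ν) x = ∫ y, cdf μ (x - y) ∂ν := by
  have hpre : ∀ y, (fun a => (a, y)) ⁻¹' ((fun p : ℝ × ℝ => p.1 + p.2) ⁻¹' Iic x) = Iic (x - y) :=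
    fun y => by ext a; simp [le_sub_iff_add_le]
  have hmeas : Measurable fun y => μ (Iic (x - y)) :=
    Antitone.measurable fun y y' h => measure_mono (Iic_subset_Iic.2 (by linarith))
  rw [cdf_eq_real, Measure.real, Measure.conv, Measure.map_apply measurable_add measurableSet_Iic,
    Measure.prod_apply_symm (measurable_add measurableSet_Iic)]
  simp only [hpre, cdf_eq_real, Measure.real]
  exact (integral_toReal hmeas.aemeasurable (ae_of_all _ fun _ => measure_lt_top _ _)).symm

theorem hasDerivAt_setIntegral_Iic {E : Type*} [NormedAddCommGroup E] [NormedSpace ℝ E]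
    [CompleteSpace E] {f : ℝ → E} {x : ℝ} (hf : Integrable f) (hfx : ContinuousAt f x) :
    HasDerivAt (fun y => ∫ t in Iic y, f t) (f x) x := by
  have hsplit : (fun y => ∫ t in Iic y, f t) = fun y => (∫ t in Iic 0, f t) + ∫ t in 0..y, f t := by
    ext y
    rw [← intervalIntegral.integral_Iic_sub_Iic hf.integrableOn hf.integrableOn, add_sub_cancel]
  rw [hsplit]
  exact (intervalIntegral.integral_hasDerivAt_right hf.intervalIntegrable
    hf.aestronglyMeasurable.stronglyMeasurableAtFilter hfx).const_add _

theorem StrictMono.range_eq_Ioo_of_tendsto {f : ℝ → ℝ} {a b : ℝ} (hmono : StrictMono f)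
    (hcont : Continuous f) (ha : Tendsto f atBot (𝓝 a)) (hb : Tendsto f atTop (𝓝 b)) :
    range f = Ioo a b := by
  refine Subset.antisymm ?_ fun y hy => ?_
  · rintro - ⟨x, rfl⟩
    exact ⟨(hmono.monotone.le_of_tendsto ha (x - 1)).trans_lt (hmono (by linarith)),
      (hmono (by linarith : x < x + 1)).trans_le (hmono.monotone.ge_of_tendsto hb (x + 1))⟩
  · exact mem_range_of_exists_le_of_exists_ge hcont ((ha.eventually_lt_const hy.1).exists.imp
      fun _ => le_of_lt) ((hb.eventually_const_lt hy.2).exists.imp fun _ => le_of_lt)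

theorem stdNormalCDF_eq_cdf : stdNormalCDF = cdf (gaussianReal 0 1) := by
  ext x
  rw [cdf_eq_real]
  rfl

theorem stdNormalCDF_eq_setIntegral (x : ℝ) :
    stdNormalCDF x = ∫ t in Iic x, gaussianPDFReal 0 1 t := by
  rw [stdNormalCDF, gaussianReal_apply_eq_integral 0 one_ne_zero, ENNReal.toReal_ofReal
    (setIntegral_nonneg measurableSet_Iic fun t _ => gaussianPDFReal_nonneg _ _ _)]

theorem hasDerivAt_stdNormalCDF (x : ℝ) : HasDerivAt stdNormalCDF (gaussianPDFReal 0 1 x) x := by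
  rw [funext stdNormalCDF_eq_setIntegral]
  exact hasDerivAt_setIntegral_Iic (integrable_gaussianPDFReal 0 1)
    (by unfold gaussianPDFReal; fun_prop)

theorem strictMono_stdNormalCDF : StrictMono stdNormalCDF :=
  strictMono_of_hasDerivAt_pos hasDerivAt_stdNormalCDF
    fun _ => gaussianPDFReal_pos _ _ _ one_ne_zero

theorem range_stdNormalCDF : range stdNormalCDF = Ioo 0 1 := by
  refine strictMono_stdNormalCDF.range_eq_Ioo_of_tendsto
    (continuous_iff_continuousAt.2 fun x => (hasDerivAt_stdNormalCDF x).continuousAt) ?_ ?_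
  · rw [stdNormalCDF_eq_cdf]; exact tendsto_cdf_atBot _
  · rw [stdNormalCDF_eq_cdf]; exact tendsto_cdf_atTop _

theorem stdNormalCDFInv_stdNormalCDF (x : ℝ) : stdNormalCDFInv (stdNormalCDF x) = x :=
  Function.leftInverse_invFun strictMono_stdNormalCDF.injective x

theorem setIntegral_Ioo_zero_one_eq_integral_gaussianReal {E : Type*} [NormedAddCommGroup E]
    [NormedSpace ℝ E] (g : ℝ → E) :
    ∫ x in Ioo 0 1, g x = ∫ z, g (stdNormalCDF z) ∂gaussianReal 0 1 := by
  have h := integral_image_eq_integral_abs_deriv_smul MeasurableSet.univ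
    (fun x _ => (hasDerivAt_stdNormalCDF x).hasDerivWithinAt)
    strictMono_stdNormalCDF.injective.injOn g
  rw [image_univ, range_stdNormalCDF, setIntegral_univ] at h
  rw [h, integral_gaussianReal_eq_integral_smul one_ne_zero]
  simp only [abs_of_nonneg (gaussianPDFReal_nonneg _ _ _)]

instance (v : ℝ≥0) : (gaussianReal 0 v).IsNegInvariant :=
  ⟨by rw [Measure.neg_def, gaussianReal_map_neg, neg_zero]⟩

theorem cdf_gaussianReal (μ : ℝ) {v : ℝ≥0} (hv : v ≠ 0) (x : ℝ) :
    cdf (gaussianReal μ v) x = stdNormalCDF ((x - μ) / √v) := by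
  have hsqrt : 0 < √(v : ℝ) := by positivity
  have hstd : (gaussianReal μ v).map (fun y => (y - μ) / √v) = gaussianReal 0 1 := by
    rw [show (fun y => (y - μ) / √v) = (· / √v) ∘ (· - μ) from rfl,
      ← Measure.map_map (by fun_prop) (by fun_prop), gaussianReal_map_sub_const,
      gaussianReal_map_div_const, sub_self, zero_div]
    congr
    ext
    simp [Real.sq_sqrt v.coe_nonneg, hv]
  have hpre : (fun y => (y - μ) / √v) ⁻¹' Iic ((x - μ) / √v) = Iic x := by
    ext y; simp [div_le_div_iff_of_pos_right hsqrt]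
  rw [stdNormalCDF, ← hstd, Measure.map_apply (by fun_prop) measurableSet_Iic, hpre, cdf_eq_real]
  rfl

theorem gaussian_mechanism_auc_general (ψ : ℝ) :
    ∫ x in Set.Ioo (0 : ℝ) 1, stdNormalCDF (ψ + stdNormalCDFInv x) =
      stdNormalCDF (ψ / Real.sqrt 2) := by
  calc ∫ x in Ioo (0 : ℝ) 1, stdNormalCDF (ψ + stdNormalCDFInv x)
      = ∫ z, stdNormalCDF (ψ - -z) ∂gaussianReal 0 1 := by
        simp only [setIntegral_Ioo_zero_one_eq_integral_gaussianReal, stdNormalCDFInv_stdNormalCDF,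
          sub_neg_eq_add]
    _ = cdf (gaussianReal 0 1 ∗ gaussianReal 0 1) ψ := by
        rw [integral_neg_eq_self (fun z => stdNormalCDF (ψ - z)), cdf_conv, stdNormalCDF_eq_cdf]
    _ = stdNormalCDF (ψ / √2) := by
        rw [gaussianReal_conv_gaussianReal, cdf_gaussianReal _ (by norm_num)]
        norm_num

/-- the area under the ROC curve `R(x) = Φ(ψ + Φ⁻¹(x))` of the Gaussian
mechanism with sensitivity index `ψ ≥ 0` equals `Φ(ψ/√2)`. -/
theorem gaussian_mechanism_auc (ψ : ℝ) (hψ : 0 ≤ ψ) :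
    ∫ x in Set.Ioo (0 : ℝ) 1, stdNormalCDF (ψ + stdNormalCDFInv x) =
      stdNormalCDF (ψ / Real.sqrt 2) :=
  gaussian_mechanism_auc_general ψ
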